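/- arXiv:1208.2631 — 3 statements merged into one kernel-verified Lean document; each statement's English description precedes it below -/
import Mathlib

section
/- Let A and B be Heyting algebras, A + B their concatenation (top of A glued to bottom of B), C a Heyting algebra, and let f : A → C and g : B → C be Heyting homomorphisms such that f(⊤_A) = g(⊥_B), f(a) ≤ f(⊤_A) for all a ∈ A, and g(⊥_B) ≤ g(b) for all b ∈ B. Then the map h : A + B → C defined by h(x) = f(x) for x ∈ A and h(x) = g(x) for x ∈ B is a Heyting homomorphism (preserving ⊓, ⊔, ⇨, ⊥, ⊤). -/
/-!
Every element of `A + B` comes from `A` or from `B`, and an element of `A` lies below every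
element of `B`. So two elements either come from the same summand, where `h` is `f` or `g`, or
are comparable, where `⊓`, `⊔` and `⇨` are determined by monotonicity of `h`. The one exception is
`b ⇨ a` with `b ∈ B` and `a ∈ A \ {⊤}`, which is `a` itself in `A + B`; on the other side
`g b ⇨ f a = f a`, because `f ⊤ ≤ g b` and `f ⊤ ⇨ f a = f (⊤ ⇨ a) = f a`.
-/

/-- `iA : A → S`, `iB : B → S` realize `S` as the concatenation `A + B` of the
Heyting algebras `A` and `B` (top of `A` glued to bottom of `B`). -/
def IsConcat {A B S : Type*} [HeytingAlgebra A] [HeytingAlgebra B] [HeytingAlgebra S]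
    (iA : A → S) (iB : B → S) : Prop :=
  Function.Injective iA ∧ Function.Injective iB ∧
  (∀ x y : A, iA (x ⊓ y) = iA x ⊓ iA y) ∧ (∀ x y : A, iA (x ⊔ y) = iA x ⊔ iA y) ∧
  iA ⊥ = ⊥ ∧
  (∀ x y : B, iB (x ⊓ y) = iB x ⊓ iB y) ∧ (∀ x y : B, iB (x ⊔ y) = iB x ⊔ iB y) ∧
  (∀ x y : B, iB (x ⇨ y) = iB x ⇨ iB y) ∧ iB ⊤ = ⊤ ∧
  iA ⊤ = iB ⊥ ∧ (∀ (a : A) (b : B), iA a ≤ iB b) ∧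
  (Set.range iA ∪ Set.range iB = Set.univ)

theorem Function.Injective.le_iff_le_of_map_inf {α β : Type*} [SemilatticeInf α]
    [SemilatticeInf β] {φ : α → β} (hφ : Function.Injective φ)
    (hinf : ∀ x y, φ (x ⊓ y) = φ x ⊓ φ y) {x y : α} : φ x ≤ φ y ↔ x ≤ y := by
  rw [← inf_eq_left, ← hinf, hφ.eq_iff, inf_eq_left]

theorem map_top_of_map_himp {α β : Type*} [HeytingAlgebra α] [HeytingAlgebra β] {φ : α → β}
    (hφ : ∀ x y, φ (x ⇨ y) = φ x ⇨ φ y) : φ ⊤ = ⊤ := by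
  rw [← himp_self (a := (⊤ : α)), hφ, himp_self]

theorem himp_map_eq_of_map_top_le {α β : Type*} [HeytingAlgebra α] [HeytingAlgebra β]
    {φ : α → β} (hφ : ∀ x y, φ (x ⇨ y) = φ x ⇨ φ y) {c : β} (hc : φ ⊤ ≤ c) (a : α) :
    c ⇨ φ a = φ a :=
  le_antisymm ((himp_le_himp_right hc).trans (by rw [← hφ, top_himp])) le_himp

-- `⊥` is a dummy value: the ranges of `iA` and `iB` cover `S`.
noncomputable def concatLift {A B S C : Type*} [Bot C] (iA : A → S) (iB : B → S) (f : A → C)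
    (g : B → C) : S → C :=
  Function.extend iA f (Function.extend iB g fun _ => ⊥)

namespace IsConcat

variable {A B S : Type*} [HeytingAlgebra A] [HeytingAlgebra B] [HeytingAlgebra S]
  {iA : A → S} {iB : B → S} (hS : IsConcat iA iB)
include hS

theorem injective_left : Function.Injective iA := hS.1
theorem injective_right : Function.Injective iB := hS.2.1
theorem map_inf_left (x y : A) : iA (x ⊓ y) = iA x ⊓ iA y := hS.2.2.1 x y
theorem map_sup_left (x y : A) : iA (x ⊔ y) = iA x ⊔ iA y := hS.2.2.2.1 x y
theorem map_bot_left : iA ⊥ = ⊥ := hS.2.2.2.2.1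
theorem map_inf_right (x y : B) : iB (x ⊓ y) = iB x ⊓ iB y := hS.2.2.2.2.2.1 x y
theorem map_sup_right (x y : B) : iB (x ⊔ y) = iB x ⊔ iB y := hS.2.2.2.2.2.2.1 x y
theorem map_himp_right (x y : B) : iB (x ⇨ y) = iB x ⇨ iB y := hS.2.2.2.2.2.2.2.1 x y
theorem map_top_right : iB ⊤ = ⊤ := hS.2.2.2.2.2.2.2.2.1
theorem left_top_eq_right_bot : iA ⊤ = iB ⊥ := hS.2.2.2.2.2.2.2.2.2.1
theorem left_le_right (a : A) (b : B) : iA a ≤ iB b := hS.2.2.2.2.2.2.2.2.2.2.1 a b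

theorem exists_left_or_exists_right (x : S) : (∃ a, iA a = x) ∨ ∃ b, iB b = x :=
  Set.eq_univ_iff_forall.1 hS.2.2.2.2.2.2.2.2.2.2.2 x

theorem left_le_left_iff {a a' : A} : iA a ≤ iA a' ↔ a ≤ a' :=
  hS.injective_left.le_iff_le_of_map_inf hS.map_inf_left

theorem right_le_right_iff {b b' : B} : iB b ≤ iB b' ↔ b ≤ b' :=
  hS.injective_right.le_iff_le_of_map_inf hS.map_inf_right

theorem eq_top_and_eq_bot_of_right_le_left {a : A} {b : B} (h : iB b ≤ iA a) :
    a = ⊤ ∧ b = ⊥ := by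
  have hb : b = ⊥ := by
    rw [← le_bot_iff, ← hS.right_le_right_iff, ← hS.left_top_eq_right_bot]
    exact h.trans (hS.left_le_left_iff.2 le_top)
  refine ⟨?_, hb⟩
  rw [← top_le_iff, ← hS.left_le_left_iff, hS.left_top_eq_right_bot, ← hb]
  exact h

theorem exists_right_or_exists_left_ne_top (x : S) :
    (∃ b, iB b = x) ∨ ∃ a, a ≠ ⊤ ∧ iA a = x := by
  rcases hS.exists_left_or_exists_right x with ⟨a, rfl⟩ | hx
  · by_cases ha : a = ⊤
    · exact .inl ⟨⊥, by rw [ha, hS.left_top_eq_right_bot]⟩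
    · exact .inr ⟨a, ha, rfl⟩
  · exact .inl hx

theorem left_himp_left {a a' : A} (h : ¬a ≤ a') : iA a ⇨ iA a' = iA (a ⇨ a') := by
  rcases hS.exists_left_or_exists_right (iA a ⇨ iA a') with ⟨c, hc⟩ | ⟨d, hd⟩
  · rw [← hc]
    congr 1
    refine eq_of_forall_le_iff fun w => ?_
    rw [← hS.left_le_left_iff, hc, le_himp_iff, le_himp_iff, ← hS.map_inf_left,
      hS.left_le_left_iff]
  · have h' : iA a ≤ iA a ⇨ iA a' := hd ▸ hS.left_le_right a d
    exact absurd (hS.left_le_left_iff.1 (le_himp_iff_left.1 h')) h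

theorem right_himp_left {a : A} (ha : a ≠ ⊤) (b : B) : iB b ⇨ iA a = iA a := by
  rcases hS.exists_left_or_exists_right (iB b ⇨ iA a) with ⟨c, hc⟩ | ⟨d, hd⟩
  · have h : iA c ⊓ iB b ≤ iA a := le_himp_iff.1 hc.le
    rw [inf_eq_left.2 (hS.left_le_right c b), hc] at h
    exact le_antisymm h le_himp
  · have h : iB (d ⊓ b) ≤ iA a := by rw [hS.map_inf_right, hd]; exact himp_inf_le
    exact absurd (hS.eq_top_and_eq_bot_of_right_le_left h).1 ha

variable {C : Type*} [HeytingAlgebra C] {f : A → C} {g : B → C}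

theorem concatLift_left (a : A) : concatLift iA iB f g (iA a) = f a :=
  hS.injective_left.extend_apply _ _ a

theorem concatLift_right (hfg_top : f ⊤ = g ⊥) (b : B) : concatLift iA iB f g (iB b) = g b := by
  by_cases hb : ∃ a, iA a = iB b
  · obtain ⟨a, hab⟩ := hb
    obtain ⟨rfl, rfl⟩ := hS.eq_top_and_eq_bot_of_right_le_left hab.ge
    rw [← hab, hS.concatLift_left, hfg_top]
  · rw [concatLift, Function.extend_apply' _ _ _ hb, hS.injective_right.extend_apply]

theorem monotone_concatLift (hf : Monotone f) (hg : Monotone g) (hfg : ∀ a b, f a ≤ g b)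
    (hfg_top : f ⊤ = g ⊥) : Monotone (concatLift iA iB f g) := by
  intro x y hxy
  rcases hS.exists_left_or_exists_right x with ⟨a, rfl⟩ | ⟨b, rfl⟩ <;>
    rcases hS.exists_left_or_exists_right y with ⟨a', rfl⟩ | ⟨b', rfl⟩
  · rw [hS.concatLift_left, hS.concatLift_left]
    exact hf (hS.left_le_left_iff.1 hxy)
  · rw [hS.concatLift_left, hS.concatLift_right hfg_top]
    exact hfg a b'
  · obtain ⟨rfl, rfl⟩ := hS.eq_top_and_eq_bot_of_right_le_left hxy
    rw [hS.concatLift_left, hS.concatLift_right hfg_top, hfg_top]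
  · rw [hS.concatLift_right hfg_top, hS.concatLift_right hfg_top]
    exact hg (hS.right_le_right_iff.1 hxy)

theorem map_inf_concatLift (hf : ∀ x y, f (x ⊓ y) = f x ⊓ f y)
    (hg : ∀ x y, g (x ⊓ y) = g x ⊓ g y) (hfg_top : f ⊤ = g ⊥)
    (hmono : Monotone (concatLift iA iB f g)) (x y : S) :
    concatLift iA iB f g (x ⊓ y) = concatLift iA iB f g x ⊓ concatLift iA iB f g y := by
  rcases hS.exists_left_or_exists_right x with ⟨a, rfl⟩ | ⟨b, rfl⟩ <;>
    rcases hS.exists_left_or_exists_right y with ⟨a', rfl⟩ | ⟨b', rfl⟩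
  · rw [← hS.map_inf_left]
    simp only [hS.concatLift_left, hf]
  · have hab := hS.left_le_right a b'
    rw [inf_eq_left.2 hab, inf_eq_left.2 (hmono hab)]
  · have hab := hS.left_le_right a' b
    rw [inf_eq_right.2 hab, inf_eq_right.2 (hmono hab)]
  · rw [← hS.map_inf_right]
    simp only [hS.concatLift_right hfg_top, hg]

theorem map_sup_concatLift (hf : ∀ x y, f (x ⊔ y) = f x ⊔ f y)
    (hg : ∀ x y, g (x ⊔ y) = g x ⊔ g y) (hfg_top : f ⊤ = g ⊥)
    (hmono : Monotone (concatLift iA iB f g)) (x y : S) :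
    concatLift iA iB f g (x ⊔ y) = concatLift iA iB f g x ⊔ concatLift iA iB f g y := by
  rcases hS.exists_left_or_exists_right x with ⟨a, rfl⟩ | ⟨b, rfl⟩ <;>
    rcases hS.exists_left_or_exists_right y with ⟨a', rfl⟩ | ⟨b', rfl⟩
  · rw [← hS.map_sup_left]
    simp only [hS.concatLift_left, hf]
  · have hab := hS.left_le_right a b'
    rw [sup_eq_right.2 hab, sup_eq_right.2 (hmono hab)]
  · have hab := hS.left_le_right a' b
    rw [sup_eq_left.2 hab, sup_eq_left.2 (hmono hab)]
  · rw [← hS.map_sup_right]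
    simp only [hS.concatLift_right hfg_top, hg]

theorem map_himp_concatLift (hf : ∀ x y, f (x ⇨ y) = f x ⇨ f y)
    (hg : ∀ x y, g (x ⇨ y) = g x ⇨ g y) (hfg_top : f ⊤ = g ⊥) (hg_bot : ∀ b, g ⊥ ≤ g b)
    (hmono : Monotone (concatLift iA iB f g)) (x y : S) :
    concatLift iA iB f g (x ⇨ y) = concatLift iA iB f g x ⇨ concatLift iA iB f g y := by
  by_cases hxy : x ≤ y
  · rw [himp_eq_top_iff.2 hxy, himp_eq_top_iff.2 (hmono hxy), ← hS.map_top_right,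
      hS.concatLift_right hfg_top, map_top_of_map_himp hg]
  rcases hS.exists_left_or_exists_right x with ⟨a, rfl⟩ | ⟨b, rfl⟩ <;>
    rcases hS.exists_right_or_exists_left_ne_top y with ⟨b', rfl⟩ | ⟨a', ha', rfl⟩
  · exact absurd (hS.left_le_right a b') hxy
  · rw [hS.left_himp_left (mt hS.left_le_left_iff.2 hxy)]
    simp only [hS.concatLift_left, hf]
  · rw [← hS.map_himp_right]
    simp only [hS.concatLift_right hfg_top, hg]
  · rw [hS.right_himp_left ha', hS.concatLift_left, hS.concatLift_right hfg_top,
      himp_map_eq_of_map_top_le hf (hfg_top.trans_le (hg_bot b))]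

end IsConcat

/-- Gluing homomorphisms along a concatenation: if `f : A → C` and `g : B → C`
are Heyting homomorphisms with `f ⊤ = g ⊥`, `f a ≤ f ⊤` and `g ⊥ ≤ g b`, then the
piecewise map `h : A + B → C` (given by `f` on `A` and `g` on `B`) is a Heyting
homomorphism preserving `⊓, ⊔, ⇨, ⊥, ⊤`. -/
theorem stmt_12 {A B S C : Type*} [HeytingAlgebra A] [HeytingAlgebra B]
    [HeytingAlgebra S] [HeytingAlgebra C]
    (iA : A → S) (iB : B → S) (hS : IsConcat iA iB)
    (f : A → C) (g : B → C)
    (hfinf : ∀ x y : A, f (x ⊓ y) = f x ⊓ f y) (hfsup : ∀ x y : A, f (x ⊔ y) = f x ⊔ f y)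
    (hfhimp : ∀ x y : A, f (x ⇨ y) = f x ⇨ f y) (hfbot : f ⊥ = ⊥) (hftop : f ⊤ = g ⊥)
    (hginf : ∀ x y : B, g (x ⊓ y) = g x ⊓ g y) (hgsup : ∀ x y : B, g (x ⊔ y) = g x ⊔ g y)
    (hghimp : ∀ x y : B, g (x ⇨ y) = g x ⇨ g y)
    (hfle : ∀ a : A, f a ≤ f ⊤) (hgle : ∀ b : B, g ⊥ ≤ g b) :
    ∃ h : S → C,
      (∀ a : A, h (iA a) = f a) ∧ (∀ b : B, h (iB b) = g b) ∧
      (∀ x y : S, h (x ⊓ y) = h x ⊓ h y) ∧ (∀ x y : S, h (x ⊔ y) = h x ⊔ h y) ∧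
      (∀ x y : S, h (x ⇨ y) = h x ⇨ h y) ∧ h ⊥ = ⊥ ∧ h ⊤ = ⊤ := by
  have hfg : ∀ a b, f a ≤ g b := fun a b => (hfle a).trans (hftop.trans_le (hgle b))
  have hmono : Monotone (concatLift iA iB f g) :=
    hS.monotone_concatLift (OrderHomClass.mono (InfHom.mk f hfinf))
      (OrderHomClass.mono (InfHom.mk g hginf)) hfg hftop
  refine ⟨concatLift iA iB f g, hS.concatLift_left, hS.concatLift_right hftop,
    hS.map_inf_concatLift hfinf hginf hftop hmono, hS.map_sup_concatLift hfsup hgsup hftop hmono,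
    hS.map_himp_concatLift hfhimp hghimp hftop hgle hmono, ?_, ?_⟩
  · rw [← hS.map_bot_left, hS.concatLift_left, hfbot]
  · rw [← hS.map_top_right, hS.concatLift_right hftop, map_top_of_map_himp hghimp]
end

section
/- Let A and B be Heyting algebras and ∇ ⊆ B a filter of B, viewed also as a filter of the concatenation A + B. Then the quotient (A + B)/∇ is isomorphic as a Heyting algebra to A + (B/∇). -/
open Function

theorem nonempty_orderIso_of_surjective_of_le_iff {S Q T : Type*} [PartialOrder Q]
    [PartialOrder T] {f : S → Q} {g : S → T} (hf : Surjective f) (hg : Surjective g)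
    (h : ∀ s s', f s ≤ f s' ↔ g s ≤ g s') : Nonempty (Q ≃o T) := by
  have hcomp : ∀ s, g (surjInv hf (f s)) = g s := fun s =>
    le_antisymm ((h _ _).1 (surjInv_eq hf _).le) ((h _ _).1 (surjInv_eq hf _).ge)
  have hle : ∀ q q', g (surjInv hf q) ≤ g (surjInv hf q') ↔ q ≤ q' := by
    intro q q'
    obtain ⟨s, rfl⟩ := hf q
    obtain ⟨s', rfl⟩ := hf q'
    rw [hcomp, hcomp, h]
  refine ⟨OrderIso.ofSurjective (OrderEmbedding.ofMapLEIff _ hle) fun t => ?_⟩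
  obtain ⟨s, rfl⟩ := hg t
  exact ⟨f s, hcomp s⟩

namespace IsConcat

variable {A B S : Type*} [HeytingAlgebra A] [HeytingAlgebra B] [HeytingAlgebra S]
  {iA : A → S} {iB : B → S}

theorem inl_le_inl_iff (hS : IsConcat iA iB) {a a' : A} : iA a ≤ iA a' ↔ a ≤ a' := by
  obtain ⟨hinj, -, hinf, -⟩ := hS
  rw [← inf_eq_left, ← hinf, hinj.eq_iff, inf_eq_left]

theorem inr_le_inr_iff (hS : IsConcat iA iB) {b b' : B} : iB b ≤ iB b' ↔ b ≤ b' := by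
  obtain ⟨-, hinj, -, -, -, hinf, -⟩ := hS
  rw [← inf_eq_left, ← hinf, hinj.eq_iff, inf_eq_left]

theorem inr_inf (hS : IsConcat iA iB) (b b' : B) : iB (b ⊓ b') = iB b ⊓ iB b' :=
  hS.2.2.2.2.2.1 b b'

theorem inr_himp (hS : IsConcat iA iB) (b b' : B) : iB (b ⇨ b') = iB b ⇨ iB b' :=
  hS.2.2.2.2.2.2.2.1 b b'

theorem inl_top (hS : IsConcat iA iB) : iA ⊤ = iB ⊥ :=
  hS.2.2.2.2.2.2.2.2.2.1

theorem inl_le_inr (hS : IsConcat iA iB) (a : A) (b : B) : iA a ≤ iB b :=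
  hS.2.2.2.2.2.2.2.2.2.2.1 a b

theorem inl_or_inr (hS : IsConcat iA iB) (s : S) : (∃ a, iA a = s) ∨ ∃ b, iB b = s := by
  have hs : s ∈ Set.range iA ∪ Set.range iB := by
    rw [hS.2.2.2.2.2.2.2.2.2.2.2]
    trivial
  exact hs

theorem inr_le_inl_iff (hS : IsConcat iA iB) {b : B} {a : A} :
    iB b ≤ iA a ↔ b = ⊥ ∧ a = ⊤ := by
  constructor
  · intro h
    have hb : b = ⊥ := by
      rw [← le_bot_iff, ← hS.inr_le_inr_iff, ← hS.inl_top]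
      exact h.trans (hS.inl_le_inl_iff.2 le_top)
    subst hb
    rw [← hS.inl_top, hS.inl_le_inl_iff, top_le_iff] at h
    exact ⟨rfl, h⟩
  · rintro ⟨rfl, rfl⟩
    exact hS.inl_top.ge

theorem exists_lift (hS : IsConcat iA iB) {X : Type*} (f : A → X) (g : B → X)
    (hfg : f ⊤ = g ⊥) : ∃ φ : S → X, (∀ a, φ (iA a) = f a) ∧ ∀ b, φ (iB b) = g b := by
  refine ⟨extend iA f (extend iB g fun _ => f ⊤), fun a => hS.1.extend_apply _ _ a, fun b => ?_⟩
  by_cases hb : ∃ a, iA a = iB b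
  · obtain ⟨a, ha⟩ := hb
    obtain ⟨rfl, rfl⟩ := hS.inr_le_inl_iff.1 ha.ge
    rw [← ha, hS.1.extend_apply, hfg]
  · rw [extend_apply' _ _ _ hb, hS.2.1.extend_apply]

end IsConcat

section QuotientOfConcat

variable {A B S QB Q : Type*} [HeytingAlgebra A] [HeytingAlgebra B] [HeytingAlgebra S]
  [HeytingAlgebra QB] [HeytingAlgebra Q] {iA : A → S} {iB : B → S}
  {πB : HeytingHom B QB} {πS : HeytingHom S Q}

theorem map_le_map_iff_exists_inf_le (hker : ∀ s, πS s = ⊤ ↔ ∃ b, πB b = ⊤ ∧ iB b ≤ s)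
    {s s' : S} : πS s ≤ πS s' ↔ ∃ c, πB c = ⊤ ∧ iB c ⊓ s ≤ s' := by
  rw [← himp_eq_top_iff, ← map_himp, hker]
  simp only [le_himp_iff]

theorem map_inl_le_map_inl_iff (hS : IsConcat iA iB)
    (hker : ∀ s, πS s = ⊤ ↔ ∃ b, πB b = ⊤ ∧ iB b ≤ s) {a a' : A} :
    πS (iA a) ≤ πS (iA a') ↔ a ≤ a' := by
  refine ⟨fun h => ?_, fun h => OrderHomClass.mono πS (hS.inl_le_inl_iff.2 h)⟩
  obtain ⟨c, -, hc⟩ := (map_le_map_iff_exists_inf_le hker).1 h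
  rwa [inf_eq_right.2 (hS.inl_le_inr a c), hS.inl_le_inl_iff] at hc

theorem map_inr_le_map_inl_iff (hS : IsConcat iA iB)
    (hker : ∀ s, πS s = ⊤ ↔ ∃ b, πB b = ⊤ ∧ iB b ≤ s) {b : B} {a : A} :
    πS (iB b) ≤ πS (iA a) ↔ πB b = ⊥ ∧ a = ⊤ := by
  rw [map_le_map_iff_exists_inf_le hker]
  constructor
  · rintro ⟨c, hc, hle⟩
    rw [← hS.inr_inf] at hle
    obtain ⟨hcb, rfl⟩ := hS.inr_le_inl_iff.1 hle
    have := congrArg πB hcb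
    rw [map_inf, hc, top_inf_eq, map_bot] at this
    exact ⟨this, rfl⟩
  · rintro ⟨hb, rfl⟩
    refine ⟨bᶜ, by rw [map_compl, hb, compl_bot], ?_⟩
    rw [← hS.inr_inf, compl_inf_self, hS.inl_top]

theorem map_inr_eq_top_iff (hS : IsConcat iA iB)
    (hker : ∀ s, πS s = ⊤ ↔ ∃ b, πB b = ⊤ ∧ iB b ≤ s) {b : B} :
    πS (iB b) = ⊤ ↔ πB b = ⊤ := by
  rw [hker]
  constructor
  · rintro ⟨c, hc, hle⟩
    exact eq_top_mono (OrderHomClass.mono πB (hS.inr_le_inr_iff.1 hle)) hc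
  · exact fun hb => ⟨b, hb, le_rfl⟩

theorem map_inr_le_map_inr_iff (hS : IsConcat iA iB)
    (hker : ∀ s, πS s = ⊤ ↔ ∃ b, πB b = ⊤ ∧ iB b ≤ s) {b b' : B} :
    πS (iB b) ≤ πS (iB b') ↔ πB b ≤ πB b' := by
  rw [← himp_eq_top_iff, ← map_himp, ← hS.inr_himp, map_inr_eq_top_iff hS hker, map_himp,
    himp_eq_top_iff]

theorem map_le_map_iff_lift_le_lift {T : Type*} [HeytingAlgebra T] {jA : A → T}
    {jB : QB → T} (hS : IsConcat iA iB) (hT : IsConcat jA jB)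
    (hker : ∀ s, πS s = ⊤ ↔ ∃ b, πB b = ⊤ ∧ iB b ≤ s) {φ : S → T}
    (hφA : ∀ a, φ (iA a) = jA a) (hφB : ∀ b, φ (iB b) = jB (πB b)) (s s' : S) :
    πS s ≤ πS s' ↔ φ s ≤ φ s' := by
  rcases hS.inl_or_inr s with ⟨a, rfl⟩ | ⟨b, rfl⟩ <;>
    rcases hS.inl_or_inr s' with ⟨a', rfl⟩ | ⟨b', rfl⟩
  · rw [hφA, hφA, hT.inl_le_inl_iff, map_inl_le_map_inl_iff hS hker]
  · rw [hφA, hφB]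
    exact iff_of_true (OrderHomClass.mono πS (hS.inl_le_inr a b')) (hT.inl_le_inr a _)
  · rw [hφB, hφA, hT.inr_le_inl_iff, map_inr_le_map_inl_iff hS hker]
  · rw [hφB, hφB, hT.inr_le_inr_iff, map_inr_le_map_inr_iff hS hker]

end QuotientOfConcat

theorem stmt_13_general {A B S QB Q T : Type*} [HeytingAlgebra A] [HeytingAlgebra B]
    [HeytingAlgebra S] [HeytingAlgebra QB] [HeytingAlgebra Q] [HeytingAlgebra T]
    (iA : A → S) (iB : B → S) (hS : IsConcat iA iB)
    (F : Set B)
    (πB : HeytingHom B QB) (hπBsurj : Function.Surjective πB)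
    (hπBker : ∀ b : B, πB b = ⊤ ↔ b ∈ F)
    (πS : HeytingHom S Q) (hπSsurj : Function.Surjective πS)
    (hπSker : ∀ s : S, πS s = ⊤ ↔ ∃ b ∈ F, iB b ≤ s)
    (jA : A → T) (jB : QB → T) (hT : IsConcat jA jB) :
    Nonempty (Q ≃o T) := by
  have hker : ∀ s, πS s = ⊤ ↔ ∃ b, πB b = ⊤ ∧ iB b ≤ s := by
    simpa only [hπBker] using hπSker
  obtain ⟨φ, hφA, hφB⟩ :=
    hS.exists_lift jA (jB ∘ πB) (by rw [comp_apply, map_bot, hT.inl_top])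
  refine nonempty_orderIso_of_surjective_of_le_iff hπSsurj (g := φ) ?_
    (map_le_map_iff_lift_le_lift hS hT hker hφA hφB)
  intro t
  rcases hT.inl_or_inr t with ⟨a, rfl⟩ | ⟨q, rfl⟩
  · exact ⟨iA a, hφA a⟩
  · obtain ⟨b, rfl⟩ := hπBsurj q
    exact ⟨iB b, hφB b⟩

/-- If `S = A + B` is a concatenation of Heyting algebras, `F` is a filter of `B`,
`πB : B → QB` is the quotient of `B` by `F` (a surjective Heyting homomorphism whose
kernel is `F`), `πS : S → Q` is the quotient of `S` by the filter generated by `F`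
(the upward closure of the image of `F`), and `T = A + QB` is a concatenation, then
`Q = (A + B)/∇` and `T = A + (B/∇)` are isomorphic Heyting algebras. -/
theorem stmt_13 {A B S QB Q T : Type*} [HeytingAlgebra A] [HeytingAlgebra B]
    [HeytingAlgebra S] [HeytingAlgebra QB] [HeytingAlgebra Q] [HeytingAlgebra T]
    (iA : A → S) (iB : B → S) (hS : IsConcat iA iB)
    (F : Set B) (hFtop : ⊤ ∈ F) (hFup : ∀ x ∈ F, ∀ y : B, x ≤ y → y ∈ F)
    (hFinf : ∀ x ∈ F, ∀ y ∈ F, x ⊓ y ∈ F)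
    (πB : HeytingHom B QB) (hπBsurj : Function.Surjective πB)
    (hπBker : ∀ b : B, πB b = ⊤ ↔ b ∈ F)
    (πS : HeytingHom S Q) (hπSsurj : Function.Surjective πS)
    (hπSker : ∀ s : S, πS s = ⊤ ↔ ∃ b ∈ F, iB b ≤ s)
    (jA : A → T) (jB : QB → T) (hT : IsConcat jA jB) :
    Nonempty (Q ≃o T) :=
  stmt_13_general iA iB hS F πB hπBsurj hπBker πS hπSsurj hπSker jA jB hT
end

section
/- The relation A ≤ B defined on Heyting algebras by 'A embeds into some quotient of B' (i.e. there is a surjective Heyting homomorphism B → C and an injective Heyting homomorphism A → C for some Heyting algebra C) is transitive. -/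
/-!
Let `A ↪ C₁ ↞ B` via `e₁, p₁` and `B ↪ C₂ ↞ D` via `e₂, p₂`. Congruences of a Heyting algebra
are given by its filters. Push the kernel filter of `p₁` forward along `e₂` to a filter `F` of
`C₂`. Since `e₂` is an order embedding, `F` meets `e₂(B)` exactly in `e₂(ker p₁)`, so
`B → C₂ ⧸ F` has the same kernel as `p₁`. Hence `C₁` embeds into `C₂ ⧸ F`, and `C₂ ⧸ F` is a
quotient of `D`.
-/

open Function Order
open scoped symmDiff

theorem inf_inf_himp_inf {α : Type*} [GeneralizedHeytingAlgebra α] (s x y : α) :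
    s ⊓ (s ⊓ x ⇨ s ⊓ y) = s ⊓ (x ⇨ y) := by
  rw [← himp_himp, inf_himp, himp_inf_distrib, ← inf_assoc, inf_eq_left.2 le_himp]

theorem inf_eq_inf_of_le {α : Type*} [SemilatticeInf α] {s t x y : α} (hts : t ≤ s)
    (h : s ⊓ x = s ⊓ y) : t ⊓ x = t ⊓ y := by
  rw [← inf_eq_left.2 hts, inf_assoc, h, inf_assoc]

theorem map_le_map_iff_of_injective {α β G : Type*} [SemilatticeInf α] [SemilatticeInf β]
    [FunLike G α β] [InfHomClass G α β] {f : G} (hf : Injective f) {a b : α} :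
    f a ≤ f b ↔ a ≤ b := by
  rw [← inf_eq_left, ← map_inf, hf.eq_iff, inf_eq_left]

namespace Order.PFilter

variable {α β G : Type*}

def map [Preorder α] [Preorder β] [FunLike G α β] [OrderHomClass G α β] (f : G)
    (F : PFilter α) : PFilter β :=
  IsPFilter.toPFilter (F := {y | ∃ x ∈ F, f x ≤ y}) <| .of_def
    (let ⟨x, hx⟩ := F.nonempty; ⟨f x, x, hx, le_rfl⟩)
    (fun _ ⟨x, hx, hxy⟩ _ ⟨x', hx', hxy'⟩ =>
      let ⟨z, hz, hzx, hzx'⟩ := F.directed x hx x' hx'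
      ⟨f z, ⟨z, hz, le_rfl⟩, (OrderHomClass.mono f hzx).trans hxy,
        (OrderHomClass.mono f hzx').trans hxy'⟩)
    (fun hyz ⟨x, hx, hxy⟩ => ⟨x, hx, hxy.trans hyz⟩)

theorem apply_mem_map_iff_of_injective [SemilatticeInf α] [SemilatticeInf β] [FunLike G α β]
    [InfHomClass G α β] {f : G} (hf : Injective f) {F : PFilter α} {x : α} :
    f x ∈ F.map f ↔ x ∈ F :=
  ⟨fun ⟨_, hx', hle⟩ => F.mem_of_le ((map_le_map_iff_of_injective hf).1 hle) hx',
    fun hx => ⟨x, hx, le_rfl⟩⟩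

end Order.PFilter

namespace HeytingHom

variable {α β γ : Type*} [HeytingAlgebra α] [HeytingAlgebra β] [HeytingAlgebra γ]

def ker (f : HeytingHom α β) : PFilter α :=
  IsPFilter.toPFilter (F := {a | f a = ⊤}) <| .of_def ⟨⊤, map_top f⟩
    (fun a ha b hb =>
      ⟨a ⊓ b, show f (a ⊓ b) = ⊤ by rw [map_inf, (ha : f a = ⊤), (hb : f b = ⊤), inf_top_eq],
        inf_le_left, inf_le_right⟩)
    (fun hab ha => top_unique (ha.symm.trans_le (OrderHomClass.mono f hab)))

theorem mem_ker {f : HeytingHom α β} {a : α} : a ∈ f.ker ↔ f a = ⊤ := Iff.rfl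

theorem map_eq_map_iff (f : HeytingHom α β) {a b : α} : f a = f b ↔ a ⇔ b ∈ f.ker := by
  rw [mem_ker, map_bihimp, bihimp_eq_top]

theorem map_eq_map_of_ker_le {p : HeytingHom α β} {q : HeytingHom α γ} (h : p.ker ≤ q.ker)
    {a b : α} (hab : p a = p b) : q a = q b :=
  q.map_eq_map_iff.2 (h (p.map_eq_map_iff.1 hab))

noncomputable def liftOfSurjective (p : HeytingHom α β) (hp : Surjective p) (q : HeytingHom α γ)
    (h : p.ker ≤ q.ker) : HeytingHom β γ :=
  haveI hq : ∀ a, q (surjInv hp (p a)) = q a := fun _ => map_eq_map_of_ker_le h (surjInv_eq hp _)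
  { toFun := fun b => q (surjInv hp b)
    map_sup' := by
      intro b b'
      obtain ⟨⟨a, rfl⟩, ⟨a', rfl⟩⟩ := And.intro (hp b) (hp b')
      simp only [← map_sup, hq]
    map_inf' := by
      intro b b'
      obtain ⟨⟨a, rfl⟩, ⟨a', rfl⟩⟩ := And.intro (hp b) (hp b')
      simp only [← map_inf, hq]
    map_himp' := by
      intro b b'
      obtain ⟨⟨a, rfl⟩, ⟨a', rfl⟩⟩ := And.intro (hp b) (hp b')
      simp only [← map_himp, hq]
    map_bot' := by rw [← map_bot p, hq, map_bot] }

variable {p : HeytingHom α β} {hp : Surjective p} {q : HeytingHom α γ} {h : p.ker ≤ q.ker}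

theorem liftOfSurjective_apply (a : α) : p.liftOfSurjective hp q h (p a) = q a :=
  map_eq_map_of_ker_le h (surjInv_eq hp _)

theorem liftOfSurjective_injective (h' : q.ker ≤ p.ker) :
    Injective (p.liftOfSurjective hp q h) := by
  intro b b' hbb'
  obtain ⟨⟨a, rfl⟩, ⟨a', rfl⟩⟩ := And.intro (hp b) (hp b')
  rw [liftOfSurjective_apply, liftOfSurjective_apply] at hbb'
  exact map_eq_map_of_ker_le h' hbb'

end HeytingHom

namespace Order.PFilter

variable {H : Type*} [HeytingAlgebra H] (F : PFilter H)

-- Equivalent to `x ⇔ y ∈ F`; in this form compatibility with `⊓, ⊔, ⇨` is just distributivity.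
def heytingSetoid : Setoid H where
  r x y := ∃ s ∈ F, s ⊓ x = s ⊓ y
  iseqv :=
    { refl _ := ⟨⊤, F.top_mem, rfl⟩
      symm := fun ⟨s, hs, h⟩ => ⟨s, hs, h.symm⟩
      trans := fun ⟨s, hs, h⟩ ⟨t, ht, h'⟩ => ⟨s ⊓ t, F.inf_mem hs ht,
        (inf_eq_inf_of_le inf_le_left h).trans (inf_eq_inf_of_le inf_le_right h')⟩ }

instance : HasQuotient H (PFilter H) := ⟨fun F => Quotient F.heytingSetoid⟩

variable {F}

theorem heytingSetoid.exists_common_witness {x y z w : H} (h : F.heytingSetoid x y)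
    (h' : F.heytingSetoid z w) : ∃ s ∈ F, s ⊓ x = s ⊓ y ∧ s ⊓ z = s ⊓ w :=
  let ⟨s, hs, h⟩ := h
  let ⟨t, ht, h'⟩ := h'
  ⟨s ⊓ t, F.inf_mem hs ht, inf_eq_inf_of_le inf_le_left h, inf_eq_inf_of_le inf_le_right h'⟩

namespace Quotient

def mk (x : H) : H ⧸ F := _root_.Quotient.mk F.heytingSetoid x

theorem mk_surjective : Surjective (mk : H → H ⧸ F) := _root_.Quotient.mk_surjective

theorem mk_eq_mk {x y : H} : (mk x : H ⧸ F) = mk y ↔ ∃ s ∈ F, s ⊓ x = s ⊓ y :=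
  _root_.Quotient.eq

instance : Min (H ⧸ F) := ⟨_root_.Quotient.map₂ (· ⊓ ·) fun _ _ h _ _ h' =>
  let ⟨s, hs, h, h'⟩ := heytingSetoid.exists_common_witness h h'
  ⟨s, hs, by rw [inf_inf_distrib_left, h, h', ← inf_inf_distrib_left]⟩⟩

instance : Max (H ⧸ F) := ⟨_root_.Quotient.map₂ (· ⊔ ·) fun _ _ h _ _ h' =>
  let ⟨s, hs, h, h'⟩ := heytingSetoid.exists_common_witness h h'
  ⟨s, hs, by rw [inf_sup_left, h, h', ← inf_sup_left]⟩⟩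

instance : HImp (H ⧸ F) := ⟨_root_.Quotient.map₂ (· ⇨ ·) fun _ _ h _ _ h' =>
  let ⟨s, hs, h, h'⟩ := heytingSetoid.exists_common_witness h h'
  ⟨s, hs, by rw [← inf_inf_himp_inf, h, h', inf_inf_himp_inf]⟩⟩

instance : Top (H ⧸ F) := ⟨mk ⊤⟩

instance : Bot (H ⧸ F) := ⟨mk ⊥⟩

instance : Lattice (H ⧸ F) := Lattice.mk'
  (by rintro ⟨x⟩ ⟨y⟩; exact congrArg mk (sup_comm x y))
  (by rintro ⟨x⟩ ⟨y⟩ ⟨z⟩; exact congrArg mk (sup_assoc x y z))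
  (by rintro ⟨x⟩ ⟨y⟩; exact congrArg mk (inf_comm x y))
  (by rintro ⟨x⟩ ⟨y⟩ ⟨z⟩; exact congrArg mk (inf_assoc x y z))
  (by rintro ⟨x⟩ ⟨y⟩; exact congrArg mk sup_inf_self)
  (by rintro ⟨x⟩ ⟨y⟩; exact congrArg mk inf_sup_self)

theorem mk_le_mk {x y : H} : (mk x : H ⧸ F) ≤ mk y ↔ ∃ s ∈ F, s ⊓ x ≤ y := by
  rw [← inf_eq_left]
  change mk (x ⊓ y) = mk x ↔ _
  simp_rw [mk_eq_mk, ← inf_assoc, inf_eq_left]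

instance : HeytingAlgebra (H ⧸ F) where
  le_top := by rintro ⟨x⟩; exact mk_le_mk.2 ⟨⊤, F.top_mem, le_top⟩
  bot_le := by rintro ⟨x⟩; exact mk_le_mk.2 ⟨⊤, F.top_mem, inf_le_right.trans bot_le⟩
  le_himp_iff := by
    rintro ⟨x⟩ ⟨y⟩ ⟨z⟩
    change mk x ≤ mk (y ⇨ z) ↔ mk (x ⊓ y) ≤ mk z
    simp_rw [mk_le_mk, le_himp_iff, inf_assoc]
  compl a := a ⇨ ⊥
  himp_bot _ := rfl

theorem mk_eq_top {x : H} : (mk x : H ⧸ F) = ⊤ ↔ x ∈ F := by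
  refine mk_eq_mk.trans ⟨fun ⟨s, hs, h⟩ => F.mem_of_le ?_ hs, fun hx => ⟨x, hx, ?_⟩⟩
  · exact inf_eq_left.1 (h.trans (inf_top_eq s))
  · rw [inf_idem, inf_top_eq]

end Quotient

variable (F)

def mkHom : HeytingHom H (H ⧸ F) where
  toFun := Quotient.mk
  map_sup' _ _ := rfl
  map_inf' _ _ := rfl
  map_himp' _ _ := rfl
  map_bot' := rfl

theorem mkHom_surjective : Surjective F.mkHom := Quotient.mk_surjective

theorem ker_mkHom : F.mkHom.ker = F :=
  SetLike.ext fun _ => Quotient.mk_eq_top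

end Order.PFilter

universe w

noncomputable instance {α : Type*} [HeytingAlgebra α] [Small.{w} α] :
    HeytingAlgebra (Shrink.{w} α) :=
  (equivShrink α).symm.heytingAlgebra

-- The quotient built from `C₂` lives in the universe of `C₂`; `Shrink` moves it to `w`.
theorem exists_heytAlg_of_small {A D Q : Type*} [HeytingAlgebra A] [HeytingAlgebra D]
    [HeytingAlgebra Q] [Small.{w} D] (p : HeytingHom D Q) (hp : Surjective p)
    (e : HeytingHom A Q) (he : Injective e) :
    ∃ (C : HeytAlg.{w}) (p : HeytingHom D C) (e : HeytingHom A C),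
      Surjective p ∧ Injective e :=
  have : Small.{w} Q := small_of_surjective hp
  ⟨.of (Shrink.{w} Q), (orderIsoShrink Q : HeytingHom Q (Shrink.{w} Q)).comp p,
    (orderIsoShrink Q : HeytingHom Q (Shrink.{w} Q)).comp e,
    (orderIsoShrink Q).surjective.comp hp, (orderIsoShrink Q).injective.comp he⟩

/-- The relation "A embeds into some quotient of B" on Heyting algebras (there are a
Heyting algebra `C`, a surjective Heyting homomorphism `B → C` and an injective
Heyting homomorphism `A → C`) is transitive. -/
theorem stmt_18 {A B D : Type} [HeytingAlgebra A] [HeytingAlgebra B] [HeytingAlgebra D]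
    (hAB : ∃ (C : HeytAlg) (p : HeytingHom B ↥C) (e : HeytingHom A ↥C),
      Function.Surjective p ∧ Function.Injective e)
    (hBD : ∃ (C : HeytAlg) (p : HeytingHom D ↥C) (e : HeytingHom B ↥C),
      Function.Surjective p ∧ Function.Injective e) :
    ∃ (C : HeytAlg) (p : HeytingHom D ↥C) (e : HeytingHom A ↥C),
      Function.Surjective p ∧ Function.Injective e := by
  obtain ⟨C₁, p₁, e₁, hp₁, he₁⟩ := hAB
  obtain ⟨C₂, p₂, e₂, hp₂, he₂⟩ := hBD
  set F := p₁.ker.map e₂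
  have hker : (F.mkHom.comp e₂).ker = p₁.ker := SetLike.ext fun _ =>
    (SetLike.ext_iff.1 F.ker_mkHom _).trans (PFilter.apply_mem_map_iff_of_injective he₂)
  let ι := p₁.liftOfSurjective hp₁ (F.mkHom.comp e₂) hker.ge
  have hι : Injective ι := p₁.liftOfSurjective_injective hker.le
  exact exists_heytAlg_of_small (F.mkHom.comp p₂) (F.mkHom_surjective.comp hp₂) (ι.comp e₁)
    (hι.comp he₁)
end
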